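/- arXiv:1705.10883 — 5 statements merged into one kernel-verified Lean document; each statement's English description precedes it below -/
import Mathlib

section
/- The tree ensemble optimization problem — given a weighted ensemble of decision trees f_1,…,f_T over binary inputs X ∈ {0,1}^n with weights λ_t, find X maximizing Σ_t λ_t f_t(X) — is NP-hard. In particular, the minimum vertex cover problem on a graph (V,E) reduces in polynomial time to a tree ensemble optimization instance with |V| + |E| trees, each of depth at most 2, over binary variables X ∈ {0,1}^{|V|}. -/
/-- `S` is a vertex cover of the edge set `E`: every edge has an endpoint in `S`. -/
def IsCover {V : Type} [DecidableEq V] (E : Finset (V × V)) (S : Finset V) : Prop :=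
  ∀ e ∈ E, e.1 ∈ S ∨ e.2 ∈ S

/-- The objective of the vertex cover reduction:
`g(X) = -Σ_{i∈V} [X_i = 1] - Σ_{(u,v)∈E} (|V|+1)·[X_u = 0 ∧ X_v = 0]`. -/
def vcObj {V : Type} [Fintype V] [DecidableEq V] (E : Finset (V × V)) (X : V → Bool) : ℤ :=
  -(∑ i : V, if X i = true then (1 : ℤ) else 0)
    - ∑ e ∈ E, ((Fintype.card V : ℤ) + 1) * (if X e.1 = false ∧ X e.2 = false then 1 else 0)

section Aux

variable {V : Type} [Fintype V] [DecidableEq V] (E : Finset (V × V))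

/-- uncovered edges -/
def vcUncov (X : V → Bool) : Finset (V × V) :=
  E.filter (fun e => X e.1 = false ∧ X e.2 = false)

lemma vcObj_eq (X : V → Bool) :
    vcObj E X = -(((Finset.univ.filter fun i => X i = true).card : ℤ))
      - ((Fintype.card V : ℤ) + 1) * (vcUncov E X).card := by
  unfold vcObj vcUncov
  congr 1
  · rw [Finset.sum_boole]
  · rw [← Finset.mul_sum, Finset.sum_boole]

lemma vcCover_iff (X : V → Bool) :
    IsCover E (Finset.univ.filter fun i => X i = true) ↔ vcUncov E X = ∅ := by
  constructor
  · intro h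
    ext e
    simp only [vcUncov, Finset.mem_filter, Finset.notMem_empty, iff_false]
    rintro ⟨he, h1, h2⟩
    rcases h e he with hc | hc <;> simp_all
  · intro h e he
    by_contra hc
    push_neg at hc
    have : e ∈ vcUncov E X := by
      simp only [vcUncov, Finset.mem_filter]
      refine ⟨he, ?_, ?_⟩ <;> simp_all
    simp [h] at this

lemma vcObj_of_cover (X : V → Bool)
    (h : IsCover E (Finset.univ.filter fun i => X i = true)) :
    vcObj E X = -(((Finset.univ.filter fun i => X i = true).card : ℤ)) := by
  rw [vcObj_eq, (vcCover_iff E X).mp h]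
  simp

lemma vcObj_indicator_of_cover (S : Finset V) (h : IsCover E S) :
    vcObj E (fun i => decide (i ∈ S)) = -(S.card : ℤ) := by
  have hfil : (Finset.univ.filter fun i => decide (i ∈ S) = true) = S := by
    ext i; simp
  have hc : IsCover E (Finset.univ.filter fun i => decide (i ∈ S) = true) := by
    rw [hfil]; exact h
  rw [vcObj_of_cover E _ hc, hfil]

lemma vcObj_of_not_cover (X : V → Bool)
    (h : ¬ IsCover E (Finset.univ.filter fun i => X i = true)) :
    vcObj E X ≤ -((Fintype.card V : ℤ) + 1) := by
  rw [vcObj_eq]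
  have hne : vcUncov E X ≠ ∅ := fun he => h ((vcCover_iff E X).mpr he)
  have hu : (1 : ℤ) ≤ ((vcUncov E X).card : ℤ) := by
    have := Finset.card_pos.mpr (Finset.nonempty_of_ne_empty hne)
    exact_mod_cast this
  have hM : (0:ℤ) ≤ (Fintype.card V : ℤ) + 1 := by positivity
  have h2 : ((Fintype.card V : ℤ) + 1) * 1 ≤
      ((Fintype.card V : ℤ) + 1) * ((vcUncov E X).card : ℤ) :=
    mul_le_mul_of_nonneg_left hu hM
  have h3 : (0:ℤ) ≤ ((Finset.univ.filter fun i => X i = true).card : ℤ) := by positivity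
  linarith

lemma vcCard_le (X : V → Bool) :
    ((Finset.univ.filter fun i => X i = true).card : ℤ) ≤ (Fintype.card V : ℤ) := by
  have h := Finset.card_filter_le (Finset.univ : Finset V) (fun i => X i = true)
  rw [Finset.card_univ] at h
  exact_mod_cast h

lemma vc_main (Xstar : V → Bool) :
    (∀ X : V → Bool, vcObj E X ≤ vcObj E Xstar) ↔
      (IsCover E (Finset.univ.filter fun i => Xstar i = true) ∧
        ∀ S : Finset V, IsCover E S →
          (Finset.univ.filter fun i => Xstar i = true).card ≤ S.card) := by
  constructor
  · intro h
    have hcov : IsCover E (Finset.univ.filter fun i => Xstar i = true) := by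
      by_contra hnc
      have h1 := vcObj_of_not_cover E Xstar hnc
      have hTcov : IsCover E Finset.univ := fun e _ => Or.inl (Finset.mem_univ _)
      have h2 := vcObj_indicator_of_cover E Finset.univ hTcov
      have h3 := h (fun i => decide (i ∈ (Finset.univ : Finset V)))
      rw [h2] at h3
      have : (Finset.univ : Finset V).card = Fintype.card V := rfl
      rw [this] at h3
      linarith
    refine ⟨hcov, fun S hS => ?_⟩
    have h1 := vcObj_indicator_of_cover E S hS
    have h2 := vcObj_of_cover E Xstar hcov
    have h3 := h (fun i => decide (i ∈ S))
    rw [h1, h2] at h3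
    exact_mod_cast neg_le_neg_iff.mp h3
  · rintro ⟨hcov, hmin⟩ X
    rw [vcObj_of_cover E Xstar hcov]
    by_cases hX : IsCover E (Finset.univ.filter fun i => X i = true)
    · rw [vcObj_of_cover E X hX]
      have := hmin _ hX
      simp only [neg_le_neg_iff]
      exact_mod_cast this
    · have h1 := vcObj_of_not_cover E X hX
      have h2 := vcCard_le Xstar
      linarith

end Aux

/-- NP-hardness via reduction from minimum vertex cover: for every graph
`(V, E)` there is a tree ensemble optimization instance with `|V| + |E|` trees — each tree a
decision tree of depth at most 2 over binary inputs `X ∈ {0,1}^{|V|}`, built in polynomial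
time from `(V,E)` as in the reduction (vertex trees `f_i(X) = [X_i = 1]`, edge trees
`f_e(X) = (|V|+1)·[X_{e₁} = 0 ∧ X_{e₂} = 0]`, all weights `λ_t = -1`) — whose maximizers are
exactly the encodings of minimum vertex covers of `(V, E)`. -/
theorem treeEnsembleOpt_NPhard_vertexCover_reduction
    {V : Type} [Fintype V] [DecidableEq V] [Nonempty V] (E : Finset (V × V)) :
    ∃ (f : (V ⊕ {e // e ∈ E}) → (V → Bool) → ℤ) (lam : (V ⊕ {e // e ∈ E}) → ℤ),
      (∀ (i : V) (X : V → Bool), f (Sum.inl i) X = if X i = true then 1 else 0) ∧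
      (∀ (e : {e // e ∈ E}) (X : V → Bool),
        f (Sum.inr e) X =
          if X e.1.1 = false ∧ X e.1.2 = false then (Fintype.card V : ℤ) + 1 else 0) ∧
      (∀ i, lam i = -1) ∧
      (∀ Xstar : V → Bool,
        (∀ X : V → Bool, ∑ i, lam i * f i X ≤ ∑ i, lam i * f i Xstar) ↔
          (IsCover E (Finset.univ.filter fun i => Xstar i = true) ∧
            ∀ S : Finset V, IsCover E S →
              (Finset.univ.filter fun i => Xstar i = true).card ≤ S.card)) := by
  classical
  refine ⟨fun t X => Sum.elim
      (fun i => if X i = true then 1 else 0)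
      (fun e => if X e.1.1 = false ∧ X e.1.2 = false then (Fintype.card V : ℤ) + 1 else 0) t,
    fun _ => -1, fun i X => rfl, fun e X => rfl, fun _ => rfl, ?_⟩
  have hsum : ∀ X : V → Bool,
      (∑ i : V ⊕ {e // e ∈ E}, (-1 : ℤ) * Sum.elim
        (fun i => if X i = true then (1:ℤ) else 0)
        (fun e => if X e.1.1 = false ∧ X e.1.2 = false then (Fintype.card V : ℤ) + 1 else 0) i)
      = vcObj E X := by
    intro X
    rw [Fintype.sum_sum_type]
    unfold vcObj
    simp only [Sum.elim_inl, Sum.elim_inr, neg_one_mul, ← Finset.sum_neg_distrib]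
    rw [sub_eq_add_neg]
    congr 1
    rw [← Finset.sum_neg_distrib]
    rw [← Finset.sum_coe_sort E
      (fun e => -(((Fintype.card V : ℤ) + 1) * (if X e.1 = false ∧ X e.2 = false then 1 else 0)))]
    congr 1
    ext e
    by_cases h : X e.1.1 = false ∧ X e.1.2 = false <;> simp [h]
  intro Xstar
  have := vc_main E Xstar
  rw [← this]
  constructor <;> intro h X
  · rw [← hsum X, ← hsum Xstar]; exact h X
  · have hh := h X
    rw [← hsum X, ← hsum Xstar] at hh
    exact hh
end

section
/- Let x be a binary vector encoding an input and let t be a decision tree, with ℓ* the leaf reached by routing x down the tree. Then the vector y defined by y_ℓ = 1 if ℓ = ℓ* and y_ℓ = 0 otherwise is the unique vector satisfying: (i) Σ_{ℓ ∈ leaves(t)} y_ℓ = 1; (ii) for every split s, with q(s,x) ∈ {0,1} the value of the condition that x satisfies the query of s (i.e. takes the left branch), Σ_{ℓ ∈ left(s)} y_ℓ ≤ q(s,x) and Σ_{ℓ ∈ right(s)} y_ℓ ≤ 1 − q(s,x); (iii) y_ℓ ≥ 0 for all ℓ. -/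
inductive BTree : Type
  | leaf : BTree
  | node : BTree → BTree → BTree

namespace BTree

/-- Leaves of a tree, identified by their root-to-node path (`true` = left). -/
def leavesF : BTree → Finset (List Bool)
  | .leaf => {[]}
  | .node l r => (leavesF l).image (List.cons true) ∪ (leavesF r).image (List.cons false)

/-- Splits (internal nodes) of a tree, identified by their root-to-node path. -/
def splitsF : BTree → Finset (List Bool)
  | .leaf => ∅
  | .node l r =>
      insert [] ((splitsF l).image (List.cons true) ∪ (splitsF r).image (List.cons false))

/-- Leaves in the left subtree of split `s`. -/
def leftF (t : BTree) (s : List Bool) : Finset (List Bool) :=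
  (leavesF t).filter (fun ℓ => (s ++ [true]) <+: ℓ)

/-- Leaves in the right subtree of split `s`. -/
def rightF (t : BTree) (s : List Bool) : Finset (List Bool) :=
  (leavesF t).filter (fun ℓ => (s ++ [false]) <+: ℓ)

/-- Splits `s` such that leaf `ℓ` is in the left subtree of `s`. -/
def LSF (t : BTree) (ℓ : List Bool) : Finset (List Bool) :=
  (splitsF t).filter (fun s => (s ++ [true]) <+: ℓ)

/-- Splits `s` such that leaf `ℓ` is in the right subtree of `s`. -/
def RSF (t : BTree) (ℓ : List Bool) : Finset (List Bool) :=
  (splitsF t).filter (fun s => (s ++ [false]) <+: ℓ)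

def getLeafAux (q : List Bool → Bool) : BTree → List Bool → List Bool
  | .leaf, pth => pth
  | .node l r, pth =>
      if q pth then getLeafAux q l (pth ++ [true]) else getLeafAux q r (pth ++ [false])

/-- The leaf reached by routing down tree `t`, taking the left branch at a split `s`
iff the query value `q s` is `true`. -/
def getLeaf (t : BTree) (q : List Bool → Bool) : List Bool := getLeafAux q t []

/-- The numeric value of the 0/1 query at split `s`. -/
def qval (q : List Bool → Bool) (s : List Bool) : ℝ := if q s then 1 else 0

end BTree

/-- Feasibility of a leaf-weight vector `y` for the single-tree subproblem determined by
the binary encoding `x` (abstracted into the 0/1 split query values `q`):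
(i) the weights over the leaves sum to one; (iii) nonnegativity; and (ii) for every split
`s`, the left constraint `Σ_{ℓ ∈ left(s)} y_ℓ ≤ q(s,x)` and the right constraint
`Σ_{ℓ ∈ right(s)} y_ℓ ≤ 1 − q(s,x)`. -/
def BTree.Feasible (t : BTree) (q : List Bool → Bool) (y : List Bool → ℝ) : Prop :=
  ((∑ ℓ ∈ t.leavesF, y ℓ) = 1) ∧
  (∀ ℓ ∈ t.leavesF, 0 ≤ y ℓ) ∧
  (∀ s ∈ t.splitsF, (∑ ℓ ∈ t.leftF s, y ℓ) ≤ BTree.qval q s) ∧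
  (∀ s ∈ t.splitsF, (∑ ℓ ∈ t.rightF s, y ℓ) ≤ 1 - BTree.qval q s)

namespace BTree

lemma getLeafAux_eq (q : List Bool → Bool) (t : BTree) (pth : List Bool) :
    getLeafAux q t pth = pth ++ getLeaf t (fun s => q (pth ++ s)) := by
  induction t generalizing q pth with
  | leaf => simp [getLeafAux, getLeaf]
  | node l r ihl ihr =>
      simp only [getLeaf, getLeafAux, List.append_nil]
      by_cases h : q pth
      · rw [if_pos h, if_pos h, ihl, ihl]
        simp [List.append_assoc]
      · rw [if_neg h, if_neg h, ihr, ihr]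
        simp [List.append_assoc]

lemma getLeaf_node (q : List Bool → Bool) (l r : BTree) :
    getLeaf (node l r) q =
      if q [] then true :: getLeaf l (fun s => q (true :: s))
      else false :: getLeaf r (fun s => q (false :: s)) := by
  simp only [getLeaf, getLeafAux]
  by_cases h : q ([] : List Bool)
  · rw [if_pos h, if_pos h, getLeafAux_eq]; simp [getLeaf]
  · rw [if_neg h, if_neg h, getLeafAux_eq]; simp [getLeaf]

lemma getLeaf_mem (t : BTree) (q : List Bool → Bool) : getLeaf t q ∈ leavesF t := by
  induction t generalizing q with
  | leaf => simp [getLeaf, getLeafAux, leavesF]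
  | node l r ihl ihr =>
      rw [getLeaf_node]
      by_cases h : q ([] : List Bool)
      · rw [if_pos h]
        simp only [leavesF, Finset.mem_union, Finset.mem_image]
        exact Or.inl ⟨_, ihl _, rfl⟩
      · rw [if_neg h]
        simp only [leavesF, Finset.mem_union, Finset.mem_image]
        exact Or.inr ⟨_, ihr _, rfl⟩

lemma query_of_prefix (t : BTree) (q : List Bool → Bool) (s : List Bool)
    (hs : s ∈ splitsF t) (b : Bool) (hp : (s ++ [b]) <+: getLeaf t q) : q s = b := by
  induction t generalizing q s with
  | leaf => simp [splitsF] at hs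
  | node l r ihl ihr =>
      simp only [splitsF, Finset.mem_insert, Finset.mem_union, Finset.mem_image] at hs
      rw [getLeaf_node] at hp
      rcases hs with rfl | ⟨s', hs', rfl⟩ | ⟨s', hs', rfl⟩
      · simp only [List.nil_append] at hp
        by_cases h : q ([] : List Bool)
        · rw [if_pos h] at hp
          rcases (List.cons_prefix_cons.mp hp) with ⟨hb, -⟩
          simp [h, ← hb]
        · rw [if_neg h] at hp
          rcases (List.cons_prefix_cons.mp hp) with ⟨hb, -⟩
          simp [h, ← hb]
      · by_cases h : q ([] : List Bool)
        · rw [if_pos h] at hp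
          simp only [List.cons_append] at hp
          rcases (List.cons_prefix_cons.mp hp) with ⟨-, hp'⟩
          exact ihl (fun s => q (true :: s)) s' hs' hp'
        · rw [if_neg h] at hp
          simp only [List.cons_append] at hp
          rcases (List.cons_prefix_cons.mp hp) with ⟨hc, -⟩
          exact absurd hc (by simp)
      · by_cases h : q ([] : List Bool)
        · rw [if_pos h] at hp
          simp only [List.cons_append] at hp
          rcases (List.cons_prefix_cons.mp hp) with ⟨hc, -⟩
          exact absurd hc (by simp)
        · rw [if_neg h] at hp
          simp only [List.cons_append] at hp
          rcases (List.cons_prefix_cons.mp hp) with ⟨-, hp'⟩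
          exact ihr (fun s => q (false :: s)) s' hs' hp'

lemma exists_divergence (t : BTree) (ℓ ℓ' : List Bool)
    (hℓ : ℓ ∈ leavesF t) (hℓ' : ℓ' ∈ leavesF t) (hne : ℓ ≠ ℓ') :
    ∃ s ∈ splitsF t, ∃ b : Bool, (s ++ [b]) <+: ℓ ∧ (s ++ [!b]) <+: ℓ' := by
  induction t generalizing ℓ ℓ' with
  | leaf =>
      simp only [leavesF, Finset.mem_singleton] at hℓ hℓ'
      exact absurd (hℓ.trans hℓ'.symm) hne
  | node l r ihl ihr =>
      simp only [leavesF, Finset.mem_union, Finset.mem_image] at hℓ hℓ'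
      rcases hℓ with ⟨m, hm, rfl⟩ | ⟨m, hm, rfl⟩ <;>
        rcases hℓ' with ⟨m', hm', rfl⟩ | ⟨m', hm', rfl⟩
      · obtain ⟨s, hs, b, h1, h2⟩ := ihl m m' hm hm' (fun h => hne (by rw [h]))
        refine ⟨true :: s, ?_, b, ?_, ?_⟩
        · simp only [splitsF, Finset.mem_insert, Finset.mem_union, Finset.mem_image]
          exact Or.inr (Or.inl ⟨s, hs, rfl⟩)
        · simpa [List.cons_prefix_cons] using h1
        · simpa [List.cons_prefix_cons] using h2
      · refine ⟨[], ?_, true, ?_, ?_⟩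
        · simp [splitsF]
        · simp [List.cons_prefix_cons]
        · simp [List.cons_prefix_cons]
      · refine ⟨[], ?_, false, ?_, ?_⟩
        · simp [splitsF]
        · simp [List.cons_prefix_cons]
        · simp [List.cons_prefix_cons]
      · obtain ⟨s, hs, b, h1, h2⟩ := ihr m m' hm hm' (fun h => hne (by rw [h]))
        refine ⟨false :: s, ?_, b, ?_, ?_⟩
        · simp only [splitsF, Finset.mem_insert, Finset.mem_union, Finset.mem_image]
          exact Or.inr (Or.inr ⟨s, hs, rfl⟩)
        · simpa [List.cons_prefix_cons] using h1
        · simpa [List.cons_prefix_cons] using h2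

lemma qval_nonneg (q : List Bool → Bool) (s : List Bool) : 0 ≤ qval q s := by
  unfold qval; split <;> norm_num

lemma qval_le_one (q : List Bool → Bool) (s : List Bool) : qval q s ≤ 1 := by
  unfold qval; split <;> norm_num

end BTree

/-- the indicator vector of the leaf `ℓ* = GetLeaf(x,t)` reached by routing
the encoded input down the tree is feasible for the single-tree subproblem, and it is the
unique such vector (on the leaves of `t`). -/
theorem indicator_unique_feasible (t : BTree) (q : List Bool → Bool) :
    BTree.Feasible t q (fun ℓ => if ℓ = t.getLeaf q then (1 : ℝ) else 0) ∧
      ∀ y : List Bool → ℝ, BTree.Feasible t q y →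
        ∀ ℓ ∈ t.leavesF, y ℓ = if ℓ = t.getLeaf q then (1 : ℝ) else 0 := by
  constructor
  · refine ⟨?_, ?_, ?_, ?_⟩
    · rw [Finset.sum_ite_eq' t.leavesF (t.getLeaf q) (fun _ => (1 : ℝ)),
        if_pos (BTree.getLeaf_mem t q)]
    · intro ℓ _; dsimp only; split <;> norm_num
    · intro s hs
      rw [BTree.leftF, Finset.sum_ite_eq' _ (t.getLeaf q) (fun _ => (1 : ℝ))]
      by_cases hp : (s ++ [true]) <+: t.getLeaf q
      · rw [if_pos (Finset.mem_filter.mpr ⟨BTree.getLeaf_mem t q, hp⟩), BTree.qval,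
          if_pos (BTree.query_of_prefix t q s hs true hp)]
      · rw [if_neg (fun hmem => hp (Finset.mem_filter.mp hmem).2)]
        exact BTree.qval_nonneg q s
    · intro s hs
      rw [BTree.rightF, Finset.sum_ite_eq' _ (t.getLeaf q) (fun _ => (1 : ℝ))]
      by_cases hp : (s ++ [false]) <+: t.getLeaf q
      · rw [if_pos (Finset.mem_filter.mpr ⟨BTree.getLeaf_mem t q, hp⟩), BTree.qval,
          if_neg (by simpa using BTree.query_of_prefix t q s hs false hp)]
        norm_num
      · rw [if_neg (fun hmem => hp (Finset.mem_filter.mp hmem).2)]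
        have := BTree.qval_le_one q s; linarith
  · rintro y ⟨hsum, hnn, hleft, hright⟩ ℓ hℓ
    have key : ∀ m ∈ t.leavesF, m ≠ t.getLeaf q → y m = 0 := by
      intro m hm hne
      obtain ⟨s, hs, b, h1, h2⟩ :=
        BTree.exists_divergence t m (t.getLeaf q) hm (BTree.getLeaf_mem t q) hne
      have hq : q s = !b := BTree.query_of_prefix t q s hs (!b) h2
      cases b with
      | true =>
          have hmem : m ∈ t.leftF s := Finset.mem_filter.mpr ⟨hm, h1⟩
          have hle : y m ≤ ∑ ℓ' ∈ t.leftF s, y ℓ' :=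
            Finset.single_le_sum (fun i hi => hnn i (Finset.mem_filter.mp hi).1) hmem
          have : BTree.qval q s = 0 := by rw [BTree.qval, if_neg (by simp [hq])]
          have := hleft s hs
          have := hnn m hm
          linarith
      | false =>
          have hmem : m ∈ t.rightF s := Finset.mem_filter.mpr ⟨hm, h1⟩
          have hle : y m ≤ ∑ ℓ' ∈ t.rightF s, y ℓ' :=
            Finset.single_le_sum (fun i hi => hnn i (Finset.mem_filter.mp hi).1) hmem
          have : BTree.qval q s = 1 := by rw [BTree.qval, if_pos (by simp [hq])]
          have := hright s hs
          have := hnn m hm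
          linarith
    by_cases h : ℓ = t.getLeaf q
    · subst h
      rw [if_pos rfl]
      have : ∑ m ∈ t.leavesF, y m = y (t.getLeaf q) :=
        Finset.sum_eq_single_of_mem _ hℓ (fun m hm hne => key m hm hne)
      linarith
    · rw [if_neg h]; exact key ℓ hℓ h
end

section
/- Let (x, y) be a candidate solution with x a binary encoding and y nonnegative leaf weights satisfying Σ_{ℓ ∈ leaves(t)} y_ℓ = 1 for a tree t, and let ℓ* = GetLeaf(x,t). Then (x,y) satisfies the left split constraints Σ_{ℓ ∈ left(s)} y_ℓ ≤ q(s,x) and right split constraints Σ_{ℓ ∈ right(s)} y_ℓ ≤ 1 − q(s,x) for ALL splits s of t if and only if it satisfies the left constraint for all s ∈ RS(ℓ*) and the right constraint for all s ∈ LS(ℓ*). -/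
lemma getLeafAux_mem (q : List Bool → Bool) :
    ∀ (t : BTree) (pth : List Bool),
      ∃ ℓ', BTree.getLeafAux q t pth = pth ++ ℓ' ∧ ℓ' ∈ t.leavesF := by
  intro t
  induction t with
  | leaf => intro pth; exact ⟨[], by simp [BTree.getLeafAux, BTree.leavesF]⟩
  | node l r ihl ihr =>
    intro pth
    by_cases h : q pth
    · obtain ⟨ℓ', h1, h2⟩ := ihl (pth ++ [true])
      refine ⟨true :: ℓ', ?_, ?_⟩
      · simp [BTree.getLeafAux, h, h1]
      · simp only [BTree.leavesF, Finset.mem_union, Finset.mem_image]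
        exact Or.inl ⟨ℓ', h2, rfl⟩
    · obtain ⟨ℓ', h1, h2⟩ := ihr (pth ++ [false])
      refine ⟨false :: ℓ', ?_, ?_⟩
      · simp [BTree.getLeafAux, h, h1]
      · simp only [BTree.leavesF, Finset.mem_union, Finset.mem_image]
        exact Or.inr ⟨ℓ', h2, rfl⟩

lemma getLeafAux_q (q : List Bool → Bool) :
    ∀ (t : BTree) (pth s : List Bool) (b : Bool),
      pth <+: s → (s ++ [b]) <+: BTree.getLeafAux q t pth → q s = b := by
  intro t
  induction t with
  | leaf =>
    intro pth s b hps hsb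
    exfalso
    simp only [BTree.getLeafAux] at hsb
    have h1 := hps.length_le
    have h2 := hsb.length_le
    simp at h2; omega
  | node l r ihl ihr =>
    intro pth s b hps hsb
    by_cases h : q pth
    · simp only [BTree.getLeafAux, h, if_true] at hsb
      obtain ⟨ℓ', he, _⟩ := getLeafAux_mem q l (pth ++ [true])
      rcases eq_or_ne s pth with rfl | hne
      · -- s = pth; b must be true
        have h1 : (s ++ [b]) <+: (s ++ [true]) ++ ℓ' := he ▸ hsb
        have : b = true := by
          rcases h1 with ⟨u, hu⟩
          simp [List.append_assoc] at hu
          exact hu.1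
        rw [this]; exact h
      · -- pth ++ [true] <+: s
        apply ihl (pth ++ [true]) s b _ hsb
        rcases hps with ⟨u, hu⟩
        have hu0 : u ≠ [] := by rintro rfl; simp at hu; exact hne hu.symm
        obtain ⟨c, u', rfl⟩ := List.exists_cons_of_ne_nil hu0
        -- pth ++ c :: u' = s; need c = true
        have hpre : (pth ++ [true]) <+: BTree.getLeafAux q l (pth ++ [true]) := by
          rw [he]; exact ⟨ℓ', rfl⟩
        have hspre : s <+: BTree.getLeafAux q l (pth ++ [true]) :=
          ((List.prefix_append s [b]).trans hsb)
        have hc : c = true := by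
          rcases List.prefix_or_prefix_of_prefix hpre hspre with h1 | h1
          · subst hu
            rcases h1 with ⟨v, hv⟩
            simp [List.append_assoc] at hv
            exact hv.1
          · have hlen := h1.length_le
            rcases h1 with ⟨v, hv⟩
            subst hu
            simp only [List.length_append, List.length_cons, List.length_nil] at hlen
            rcases List.eq_nil_of_length_eq_zero (by omega : u'.length = 0) with rfl
            simp [List.append_assoc] at hv
            exact hv.1
        subst hc hu
        exact ⟨u', by simp⟩
    · simp only [BTree.getLeafAux, h, if_false] at hsb
      obtain ⟨ℓ', he, _⟩ := getLeafAux_mem q r (pth ++ [false])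
      rcases eq_or_ne s pth with rfl | hne
      · have h1 : (s ++ [b]) <+: (s ++ [false]) ++ ℓ' := he ▸ hsb
        have : b = false := by
          rcases h1 with ⟨u, hu⟩
          simp [List.append_assoc] at hu
          exact hu.1
        rw [this]; simpa using h
      · apply ihr (pth ++ [false]) s b _ hsb
        rcases hps with ⟨u, hu⟩
        have hu0 : u ≠ [] := by rintro rfl; simp at hu; exact hne hu.symm
        obtain ⟨c, u', rfl⟩ := List.exists_cons_of_ne_nil hu0
        have hpre : (pth ++ [false]) <+: BTree.getLeafAux q r (pth ++ [false]) := by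
          rw [he]; exact ⟨ℓ', rfl⟩
        have hspre : s <+: BTree.getLeafAux q r (pth ++ [false]) :=
          ((List.prefix_append s [b]).trans hsb)
        have hc : c = false := by
          rcases List.prefix_or_prefix_of_prefix hpre hspre with h1 | h1
          · subst hu
            rcases h1 with ⟨v, hv⟩
            simp [List.append_assoc] at hv
            exact hv.1
          · have hlen := h1.length_le
            rcases h1 with ⟨v, hv⟩
            subst hu
            simp only [List.length_append, List.length_cons, List.length_nil] at hlen
            rcases List.eq_nil_of_length_eq_zero (by omega : u'.length = 0) with rfl
            simp [List.append_assoc] at hv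
            exact hv.1
        subst hc hu
        exact ⟨u', by simp⟩

lemma diverge (q : List Bool → Bool) :
    ∀ (t : BTree) (s ℓ : List Bool), s ∈ t.splitsF → ℓ ∈ t.leavesF →
      (¬ ∃ b, (s ++ [b]) <+: ℓ) →
      ∃ p b, p ∈ t.splitsF ∧ (p ++ [b]) <+: ℓ ∧ (p ++ [!b]) <+: s := by
  intro t
  induction t with
  | leaf => intro s ℓ hs _ _; simp [BTree.splitsF] at hs
  | node l r ihl ihr =>
    intro s ℓ hs hl hnb
    simp only [BTree.leavesF, Finset.mem_union, Finset.mem_image] at hl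
    simp only [BTree.splitsF, Finset.mem_insert, Finset.mem_union, Finset.mem_image] at hs
    rcases hl with ⟨ℓ', hl', rfl⟩ | ⟨ℓ', hl', rfl⟩
    · -- leaf goes left: true :: ℓ'
      rcases hs with rfl | ⟨s', hs', rfl⟩ | ⟨s', hs', rfl⟩
      · exact absurd ⟨true, ⟨ℓ', rfl⟩⟩ hnb
      · -- s = true :: s', same side; recurse
        have : ¬ ∃ b, (s' ++ [b]) <+: ℓ' := by
          rintro ⟨b, u, hu⟩
          exact hnb ⟨b, u, by simp [hu]⟩
        obtain ⟨p, b, hp, h1, h2⟩ := ihl s' ℓ' hs' hl' this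
        refine ⟨true :: p, b, ?_, ?_, ?_⟩
        · simp only [BTree.splitsF, Finset.mem_insert, Finset.mem_union, Finset.mem_image]
          exact Or.inr (Or.inl ⟨p, hp, rfl⟩)
        · rcases h1 with ⟨u, hu⟩; exact ⟨u, by simp [hu]⟩
        · rcases h2 with ⟨u, hu⟩; exact ⟨u, by simp [hu]⟩
      · -- s = false :: s', diverges at root
        refine ⟨[], true, ?_, ⟨ℓ', rfl⟩, ⟨s', rfl⟩⟩
        simp [BTree.splitsF]
    · rcases hs with rfl | ⟨s', hs', rfl⟩ | ⟨s', hs', rfl⟩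
      · exact absurd ⟨false, ⟨ℓ', rfl⟩⟩ hnb
      · refine ⟨[], false, ?_, ⟨ℓ', rfl⟩, ⟨s', rfl⟩⟩
        simp [BTree.splitsF]
      · have : ¬ ∃ b, (s' ++ [b]) <+: ℓ' := by
          rintro ⟨b, u, hu⟩
          exact hnb ⟨b, u, by simp [hu]⟩
        obtain ⟨p, b, hp, h1, h2⟩ := ihr s' ℓ' hs' hl' this
        refine ⟨false :: p, b, ?_, ?_, ?_⟩
        · simp only [BTree.splitsF, Finset.mem_insert, Finset.mem_union, Finset.mem_image]
          exact Or.inr (Or.inr ⟨p, hp, rfl⟩)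
        · rcases h1 with ⟨u, hu⟩; exact ⟨u, by simp [hu]⟩
        · rcases h2 with ⟨u, hu⟩; exact ⟨u, by simp [hu]⟩

/-- for `(x, y)` with `y` nonnegative and summing to one over the leaves of
`t`, and `ℓ* = GetLeaf(x,t)`, the left and right split constraints hold for ALL splits of `t`
iff the left constraint holds for all `s ∈ RS(ℓ*)` and the right constraint holds for all
`s ∈ LS(ℓ*)`. -/
theorem split_constraints_traversal (t : BTree) (q : List Bool → Bool) (y : List Bool → ℝ)
    (hsum : (∑ ℓ ∈ t.leavesF, y ℓ) = 1) (hnn : ∀ ℓ ∈ t.leavesF, 0 ≤ y ℓ) :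
    ((∀ s ∈ t.splitsF, (∑ ℓ ∈ t.leftF s, y ℓ) ≤ BTree.qval q s) ∧
      (∀ s ∈ t.splitsF, (∑ ℓ ∈ t.rightF s, y ℓ) ≤ 1 - BTree.qval q s)) ↔
    ((∀ s ∈ t.RSF (t.getLeaf q), (∑ ℓ ∈ t.leftF s, y ℓ) ≤ BTree.qval q s) ∧
      (∀ s ∈ t.LSF (t.getLeaf q), (∑ ℓ ∈ t.rightF s, y ℓ) ≤ 1 - BTree.qval q s)) := by

  constructor
  · rintro ⟨h1, h2⟩
    exact ⟨fun s hs => h1 s (Finset.mem_of_mem_filter s hs),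
           fun s hs => h2 s (Finset.mem_of_mem_filter s hs)⟩
  · rintro ⟨h1, h2⟩
    have hLmem : t.getLeaf q ∈ t.leavesF := by
      obtain ⟨ℓ', he, hm⟩ := getLeafAux_mem q t []
      rw [BTree.getLeaf, he]; simpa using hm
    have hq : ∀ s b, (s ++ [b]) <+: t.getLeaf q → q s = b :=
      fun s b h => getLeafAux_q q t [] s b List.nil_prefix h
    have key : ∀ A : Finset (List Bool), A ⊆ t.leavesF → (∑ ℓ ∈ A, y ℓ) ≤ 1 := fun A hA =>
      hsum ▸ Finset.sum_le_sum_of_subset_of_nonneg hA (fun i hi _ => hnn i hi)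
    have hq0 : ∀ s, 0 ≤ BTree.qval q s := by
      intro s; unfold BTree.qval; split <;> norm_num
    have hq1 : ∀ s, BTree.qval q s ≤ 1 := by
      intro s; unfold BTree.qval; split <;> norm_num
    have hzero : ∀ s ∈ t.splitsF, (¬ ∃ b, (s ++ [b]) <+: t.getLeaf q) →
        ∀ c : Bool, (∑ ℓ ∈ t.leavesF.filter (fun ℓ => (s ++ [c]) <+: ℓ), y ℓ) ≤ 0 := by
      intro s hs hnb c
      obtain ⟨p, b, hp, hpb, hpnb⟩ := diverge q t s _ hs hLmem hnb
      have hs_sub : (t.leavesF.filter (fun ℓ => (s ++ [c]) <+: ℓ)) ⊆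
          (t.leavesF.filter (fun ℓ => (p ++ [!b]) <+: ℓ)) := by
        intro ℓ hℓ
        rw [Finset.mem_filter] at hℓ ⊢
        exact ⟨hℓ.1, hpnb.trans ((List.prefix_append s [c]).trans hℓ.2)⟩
      have hmono := Finset.sum_le_sum_of_subset_of_nonneg hs_sub
          (fun i hi _ => hnn i (Finset.mem_of_mem_filter i hi))
      refine hmono.trans ?_
      have hqp := hq p b hpb
      cases b
      · have := h1 p (Finset.mem_filter.mpr ⟨hp, hpb⟩)
        simpa [BTree.leftF, BTree.qval, hqp] using this
      · have := h2 p (Finset.mem_filter.mpr ⟨hp, hpb⟩)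
        simpa [BTree.rightF, BTree.qval, hqp] using this
    refine ⟨?_, ?_⟩ <;> intro s hs
    · by_cases hc : ∃ b, (s ++ [b]) <+: t.getLeaf q
      · obtain ⟨b, hb⟩ := hc
        cases b
        · exact h1 s (Finset.mem_filter.mpr ⟨hs, hb⟩)
        · have hqs : BTree.qval q s = 1 := by simp [BTree.qval, hq s true hb]
          rw [hqs, BTree.leftF]
          exact key _ (Finset.filter_subset _ _)
      · exact le_trans (hzero s hs hc true) (hq0 s)
    · by_cases hc : ∃ b, (s ++ [b]) <+: t.getLeaf q
      · obtain ⟨b, hb⟩ := hc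
        cases b
        · have hqs : BTree.qval q s = 0 := by simp [BTree.qval, hq s false hb]
          rw [hqs, BTree.rightF, sub_zero]
          exact key _ (Finset.filter_subset _ _)
        · exact h2 s (Finset.mem_filter.mpr ⟨hs, hb⟩)
      · have h0 := hzero s hs hc false
        have := hq1 s
        rw [BTree.rightF]
        linarith
end

section
/- Relaxation strength: every feasible solution (x, y) of the LP relaxation of the tree ensemble MIO formulation (with constraints: Σ_{ℓ ∈ leaves(t)} y_{t,ℓ} = 1; for each split s, Σ_{ℓ ∈ left(s)} y_{t,ℓ} ≤ q(s,x) and Σ_{ℓ ∈ right(s)} y_{t,ℓ} ≤ 1 − q(s,x); y ≥ 0; 0 ≤ x ≤ 1 with side constraints) is also feasible for the LP relaxation of the standard linearization formulation, whose constraints are: for each leaf ℓ and s ∈ LS(ℓ), y_{t,ℓ} ≤ q(s,x); for each s ∈ RS(ℓ), y_{t,ℓ} ≤ 1 − q(s,x); and y_{t,ℓ} ≥ Σ_{s∈LS(ℓ)} q(s,x) + Σ_{s∈RS(ℓ)} (1 − q(s,x)) − (|LS(ℓ)| + |RS(ℓ)| − 1). Consequently the LP optimal value of the first formulation is at most that of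 the second. -/
/-- Feasibility for the LP relaxation of the tree ensemble MIO formulation (per tree), with
relaxed query values `q s ∈ [0,1]` (each `q s` is a fixed affine function of the relaxed `x`):
`Σ_ℓ y_ℓ = 1`, `y ≥ 0`, and for each split `s`, `Σ_{ℓ∈left(s)} y_ℓ ≤ q s` and
`Σ_{ℓ∈right(s)} y_ℓ ≤ 1 − q s`. -/
def BTree.FeasRelax (t : BTree) (q : List Bool → ℝ) (y : List Bool → ℝ) : Prop :=
  ((∑ ℓ ∈ t.leavesF, y ℓ) = 1) ∧
  (∀ ℓ ∈ t.leavesF, 0 ≤ y ℓ) ∧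
  (∀ s ∈ t.splitsF, (∑ ℓ ∈ t.leftF s, y ℓ) ≤ q s) ∧
  (∀ s ∈ t.splitsF, (∑ ℓ ∈ t.rightF s, y ℓ) ≤ 1 - q s)

/-- Feasibility for the LP relaxation of the standard linearization formulation: `y ≥ 0`;
for each leaf `ℓ` and `s ∈ LS(ℓ)`, `y_ℓ ≤ q s`; for each `s ∈ RS(ℓ)`, `y_ℓ ≤ 1 − q s`; and
`y_ℓ ≥ Σ_{s∈LS(ℓ)} q s + Σ_{s∈RS(ℓ)} (1 − q s) − (|LS(ℓ)| + |RS(ℓ)| − 1)`. -/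
def BTree.FeasStdLin (t : BTree) (q : List Bool → ℝ) (y : List Bool → ℝ) : Prop :=
  (∀ ℓ ∈ t.leavesF, 0 ≤ y ℓ) ∧
  (∀ ℓ ∈ t.leavesF, ∀ s ∈ t.LSF ℓ, y ℓ ≤ q s) ∧
  (∀ ℓ ∈ t.leavesF, ∀ s ∈ t.RSF ℓ, y ℓ ≤ 1 - q s) ∧
  (∀ ℓ ∈ t.leavesF,
    y ℓ ≥ (∑ s ∈ t.LSF ℓ, q s) + (∑ s ∈ t.RSF ℓ, (1 - q s))
      - (((t.LSF ℓ).card : ℝ) + ((t.RSF ℓ).card : ℝ) - 1))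


namespace BTree

lemma leftF_cons_node_true (l r : BTree) (s : List Bool) :
    (node l r).leftF (true :: s) = (l.leftF s).image (List.cons true) := by
  ext a
  simp only [leftF, leavesF, Finset.mem_filter, Finset.mem_union, Finset.mem_image,
    List.cons_append]
  constructor
  · rintro ⟨(⟨x, hx, rfl⟩ | ⟨x, hx, rfl⟩), hp⟩ <;>
      simp only [List.cons_prefix_cons] at hp
    · exact ⟨x, ⟨hx, hp.2⟩, rfl⟩
    · simp at hp
  · rintro ⟨x, ⟨hx, hp⟩, rfl⟩
    exact ⟨Or.inl ⟨x, hx, rfl⟩, by simp [List.cons_prefix_cons, hp]⟩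

lemma leftF_cons_node_false (l r : BTree) (s : List Bool) :
    (node l r).leftF (false :: s) = (r.leftF s).image (List.cons false) := by
  ext a
  simp only [leftF, leavesF, Finset.mem_filter, Finset.mem_union, Finset.mem_image,
    List.cons_append]
  constructor
  · rintro ⟨(⟨x, hx, rfl⟩ | ⟨x, hx, rfl⟩), hp⟩ <;>
      simp only [List.cons_prefix_cons] at hp
    · simp at hp
    · exact ⟨x, ⟨hx, hp.2⟩, rfl⟩
  · rintro ⟨x, ⟨hx, hp⟩, rfl⟩
    exact ⟨Or.inr ⟨x, hx, rfl⟩, by simp [List.cons_prefix_cons, hp]⟩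

lemma rightF_cons_node_true (l r : BTree) (s : List Bool) :
    (node l r).rightF (true :: s) = (l.rightF s).image (List.cons true) := by
  ext a
  simp only [rightF, leavesF, Finset.mem_filter, Finset.mem_union, Finset.mem_image,
    List.cons_append]
  constructor
  · rintro ⟨(⟨x, hx, rfl⟩ | ⟨x, hx, rfl⟩), hp⟩ <;>
      simp only [List.cons_prefix_cons] at hp
    · exact ⟨x, ⟨hx, hp.2⟩, rfl⟩
    · simp at hp
  · rintro ⟨x, ⟨hx, hp⟩, rfl⟩
    exact ⟨Or.inl ⟨x, hx, rfl⟩, by simp [List.cons_prefix_cons, hp]⟩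

lemma rightF_cons_node_false (l r : BTree) (s : List Bool) :
    (node l r).rightF (false :: s) = (r.rightF s).image (List.cons false) := by
  ext a
  simp only [rightF, leavesF, Finset.mem_filter, Finset.mem_union, Finset.mem_image,
    List.cons_append]
  constructor
  · rintro ⟨(⟨x, hx, rfl⟩ | ⟨x, hx, rfl⟩), hp⟩ <;>
      simp only [List.cons_prefix_cons] at hp
    · simp at hp
    · exact ⟨x, ⟨hx, hp.2⟩, rfl⟩
  · rintro ⟨x, ⟨hx, hp⟩, rfl⟩
    exact ⟨Or.inr ⟨x, hx, rfl⟩, by simp [List.cons_prefix_cons, hp]⟩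

lemma leftF_nil_node (l r : BTree) : (node l r).leftF [] = (l.leavesF).image (List.cons true) := by
  ext a
  simp only [leftF, leavesF, Finset.mem_filter, Finset.mem_union, Finset.mem_image,
    List.nil_append]
  constructor
  · rintro ⟨(⟨x, hx, rfl⟩ | ⟨x, hx, rfl⟩), hp⟩
    · exact ⟨x, hx, rfl⟩
    · simp [List.cons_prefix_cons] at hp
  · rintro ⟨x, hx, rfl⟩
    exact ⟨Or.inl ⟨x, hx, rfl⟩, by simp [List.cons_prefix_cons]⟩

lemma rightF_nil_node (l r : BTree) : (node l r).rightF [] = (r.leavesF).image (List.cons false) := by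
  ext a
  simp only [rightF, leavesF, Finset.mem_filter, Finset.mem_union, Finset.mem_image,
    List.nil_append]
  constructor
  · rintro ⟨(⟨x, hx, rfl⟩ | ⟨x, hx, rfl⟩), hp⟩
    · simp [List.cons_prefix_cons] at hp
    · exact ⟨x, hx, rfl⟩
  · rintro ⟨x, hx, rfl⟩
    exact ⟨Or.inr ⟨x, hx, rfl⟩, by simp [List.cons_prefix_cons]⟩

lemma LSF_cons_node_true (l r : BTree) (ℓ : List Bool) :
    (node l r).LSF (true :: ℓ) = insert [] ((l.LSF ℓ).image (List.cons true)) := by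
  ext a
  simp only [LSF, splitsF, Finset.mem_filter, Finset.mem_insert, Finset.mem_union,
    Finset.mem_image]
  constructor
  · rintro ⟨(rfl | ⟨x, hx, rfl⟩ | ⟨x, hx, rfl⟩), hp⟩
    · exact Or.inl rfl
    · simp only [List.cons_append, List.cons_prefix_cons] at hp
      exact Or.inr ⟨x, ⟨hx, hp.2⟩, rfl⟩
    · simp [List.cons_prefix_cons] at hp
  · rintro (rfl | ⟨x, ⟨hx, hp⟩, rfl⟩)
    · exact ⟨Or.inl rfl, by simp [List.cons_prefix_cons]⟩
    · exact ⟨Or.inr (Or.inl ⟨x, hx, rfl⟩), by simp [List.cons_prefix_cons, hp]⟩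

lemma LSF_cons_node_false (l r : BTree) (ℓ : List Bool) :
    (node l r).LSF (false :: ℓ) = (r.LSF ℓ).image (List.cons false) := by
  ext a
  simp only [LSF, splitsF, Finset.mem_filter, Finset.mem_insert, Finset.mem_union,
    Finset.mem_image]
  constructor
  · rintro ⟨(rfl | ⟨x, hx, rfl⟩ | ⟨x, hx, rfl⟩), hp⟩
    · simp [List.cons_prefix_cons] at hp
    · simp [List.cons_prefix_cons] at hp
    · simp only [List.cons_append, List.cons_prefix_cons] at hp
      exact ⟨x, ⟨hx, hp.2⟩, rfl⟩
  · rintro ⟨x, ⟨hx, hp⟩, rfl⟩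
    exact ⟨Or.inr (Or.inr ⟨x, hx, rfl⟩), by simp [List.cons_prefix_cons, hp]⟩

lemma RSF_cons_node_false (l r : BTree) (ℓ : List Bool) :
    (node l r).RSF (false :: ℓ) = insert [] ((r.RSF ℓ).image (List.cons false)) := by
  ext a
  simp only [RSF, splitsF, Finset.mem_filter, Finset.mem_insert, Finset.mem_union,
    Finset.mem_image]
  constructor
  · rintro ⟨(rfl | ⟨x, hx, rfl⟩ | ⟨x, hx, rfl⟩), hp⟩
    · exact Or.inl rfl
    · simp [List.cons_prefix_cons] at hp
    · simp only [List.cons_append, List.cons_prefix_cons] at hp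
      exact Or.inr ⟨x, ⟨hx, hp.2⟩, rfl⟩
  · rintro (rfl | ⟨x, ⟨hx, hp⟩, rfl⟩)
    · exact ⟨Or.inl rfl, by simp [List.cons_prefix_cons]⟩
    · exact ⟨Or.inr (Or.inr ⟨x, hx, rfl⟩), by simp [List.cons_prefix_cons, hp]⟩

lemma RSF_cons_node_true (l r : BTree) (ℓ : List Bool) :
    (node l r).RSF (true :: ℓ) = (l.RSF ℓ).image (List.cons true) := by
  ext a
  simp only [RSF, splitsF, Finset.mem_filter, Finset.mem_insert, Finset.mem_union,
    Finset.mem_image]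
  constructor
  · rintro ⟨(rfl | ⟨x, hx, rfl⟩ | ⟨x, hx, rfl⟩), hp⟩
    · simp [List.cons_prefix_cons] at hp
    · simp only [List.cons_append, List.cons_prefix_cons] at hp
      exact ⟨x, ⟨hx, hp.2⟩, rfl⟩
    · simp [List.cons_prefix_cons] at hp
  · rintro ⟨x, ⟨hx, hp⟩, rfl⟩
    exact ⟨Or.inr (Or.inl ⟨x, hx, rfl⟩), by simp [List.cons_prefix_cons, hp]⟩


lemma sum_leaves_eq (t : BTree) : ∀ ℓ ∈ t.leavesF, ∀ y : List Bool → ℝ,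
    ∑ ℓ' ∈ t.leavesF, y ℓ' =
      y ℓ + (∑ s ∈ t.LSF ℓ, ∑ ℓ' ∈ t.rightF s, y ℓ')
          + (∑ s ∈ t.RSF ℓ, ∑ ℓ' ∈ t.leftF s, y ℓ') := by
  induction t with
  | leaf =>
    intro ℓ hℓ y
    simp only [leavesF, Finset.mem_singleton] at hℓ
    subst hℓ
    simp [leavesF, LSF, RSF, splitsF]
  | node l r ihl ihr =>
    intro ℓ hℓ y
    have hinjT : ∀ x ∈ (l.leavesF : Finset (List Bool)), ∀ z ∈ l.leavesF,
        List.cons true x = List.cons true z → x = z := fun x _ z _ h => by injection h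
    have hinjT' : Function.Injective (List.cons true) := fun a b h => by injection h
    have hinjF' : Function.Injective (List.cons false) := fun a b h => by injection h
    have hdisj : Disjoint ((l.leavesF).image (List.cons true))
        ((r.leavesF).image (List.cons false)) := by
      rw [Finset.disjoint_left]
      intro a ha hb
      simp only [Finset.mem_image] at ha hb
      obtain ⟨x, hx, rfl⟩ := ha
      obtain ⟨z, hz, hEq⟩ := hb
      exact absurd hEq (by simp)
    have hsum : ∑ ℓ' ∈ (node l r).leavesF, y ℓ' =
        (∑ x ∈ l.leavesF, y (true :: x)) + (∑ x ∈ r.leavesF, y (false :: x)) := by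
      rw [show (node l r).leavesF = (l.leavesF).image (List.cons true) ∪
          (r.leavesF).image (List.cons false) from rfl,
        Finset.sum_union hdisj,
        Finset.sum_image (fun x _ z _ h => hinjT' h),
        Finset.sum_image (fun x _ z _ h => hinjF' h)]
    have hR : ∀ s, ∑ ℓ' ∈ (node l r).rightF (true :: s), y ℓ'
        = ∑ x ∈ l.rightF s, y (true :: x) := fun s => by
      rw [rightF_cons_node_true, Finset.sum_image (fun x _ z _ h => hinjT' h)]
    have hL : ∀ s, ∑ ℓ' ∈ (node l r).leftF (true :: s), y ℓ'
        = ∑ x ∈ l.leftF s, y (true :: x) := fun s => by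
      rw [leftF_cons_node_true, Finset.sum_image (fun x _ z _ h => hinjT' h)]
    have hR' : ∀ s, ∑ ℓ' ∈ (node l r).rightF (false :: s), y ℓ'
        = ∑ x ∈ r.rightF s, y (false :: x) := fun s => by
      rw [rightF_cons_node_false, Finset.sum_image (fun x _ z _ h => hinjF' h)]
    have hL' : ∀ s, ∑ ℓ' ∈ (node l r).leftF (false :: s), y ℓ'
        = ∑ x ∈ r.leftF s, y (false :: x) := fun s => by
      rw [leftF_cons_node_false, Finset.sum_image (fun x _ z _ h => hinjF' h)]
    simp only [leavesF, Finset.mem_union, Finset.mem_image] at hℓ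
    rcases hℓ with ⟨ℓ₀, h₀, rfl⟩ | ⟨ℓ₀, h₀, rfl⟩
    · rw [hsum, ihl ℓ₀ h₀ (fun x => y (true :: x)),
        LSF_cons_node_true, RSF_cons_node_true,
        Finset.sum_insert (by simp),
        rightF_nil_node, Finset.sum_image (fun x _ z _ h => hinjF' h),
        Finset.sum_image (fun x _ z _ h => hinjT' h),
        Finset.sum_image (fun x _ z _ h => hinjT' h)]
      simp only [hR, hL]
      ring
    · rw [hsum, ihr ℓ₀ h₀ (fun x => y (false :: x)),
        RSF_cons_node_false, LSF_cons_node_false,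
        Finset.sum_insert (by simp),
        leftF_nil_node, Finset.sum_image (fun x _ z _ h => hinjT' h),
        Finset.sum_image (fun x _ z _ h => hinjF' h),
        Finset.sum_image (fun x _ z _ h => hinjF' h)]
      simp only [hR', hL']
      ring

end BTree

/-- relaxation strength: every feasible solution of the LP relaxation of
the tree ensemble MIO formulation is also feasible for the LP relaxation of the standard
linearization formulation; consequently, for the shared objective, the optimal value of the
first LP is at most that of the second. -/
theorem relaxation_strength (t : BTree) (q : List Bool → ℝ)
    (hq : ∀ s ∈ t.splitsF, 0 ≤ q s ∧ q s ≤ 1) :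
    (∀ y : List Bool → ℝ, t.FeasRelax q y → t.FeasStdLin q y) ∧
    (∀ (obj : (List Bool → ℝ) → ℝ) (Z₁ Z₂ : ℝ),
      IsGreatest (obj '' {y | t.FeasRelax q y}) Z₁ →
      IsGreatest (obj '' {y | t.FeasStdLin q y}) Z₂ → Z₁ ≤ Z₂) := by
  have main : ∀ y : List Bool → ℝ, t.FeasRelax q y → t.FeasStdLin q y := by
    rintro y ⟨hsum, hnn, hleft, hright⟩
    refine ⟨hnn, ?_, ?_, ?_⟩
    · intro ℓ hℓ s hs
      rw [BTree.LSF, Finset.mem_filter] at hs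
      have hmem : ℓ ∈ t.leftF s := Finset.mem_filter.mpr ⟨hℓ, hs.2⟩
      calc y ℓ ≤ ∑ ℓ' ∈ t.leftF s, y ℓ' :=
            Finset.single_le_sum (fun i hi => hnn i (Finset.mem_of_mem_filter i hi)) hmem
        _ ≤ q s := hleft s hs.1
    · intro ℓ hℓ s hs
      rw [BTree.RSF, Finset.mem_filter] at hs
      have hmem : ℓ ∈ t.rightF s := Finset.mem_filter.mpr ⟨hℓ, hs.2⟩
      calc y ℓ ≤ ∑ ℓ' ∈ t.rightF s, y ℓ' :=
            Finset.single_le_sum (fun i hi => hnn i (Finset.mem_of_mem_filter i hi)) hmem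
        _ ≤ 1 - q s := hright s hs.1
    · intro ℓ hℓ
      have key := t.sum_leaves_eq ℓ hℓ y
      rw [hsum] at key
      have hA : (∑ s ∈ t.LSF ℓ, ∑ ℓ' ∈ t.rightF s, y ℓ') ≤ ∑ s ∈ t.LSF ℓ, (1 - q s) :=
        Finset.sum_le_sum fun s hs => hright s (Finset.mem_of_mem_filter s hs)
      have hB : (∑ s ∈ t.RSF ℓ, ∑ ℓ' ∈ t.leftF s, y ℓ') ≤ ∑ s ∈ t.RSF ℓ, q s :=
        Finset.sum_le_sum fun s hs => hleft s (Finset.mem_of_mem_filter s hs)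
      have e1 : ∑ s ∈ t.LSF ℓ, (1 - q s) = ((t.LSF ℓ).card : ℝ) - ∑ s ∈ t.LSF ℓ, q s := by
        rw [Finset.sum_sub_distrib, Finset.sum_const, nsmul_eq_mul, mul_one]
      have e2 : ∑ s ∈ t.RSF ℓ, q s = ((t.RSF ℓ).card : ℝ) - ∑ s ∈ t.RSF ℓ, (1 - q s) := by
        rw [Finset.sum_sub_distrib, Finset.sum_const, nsmul_eq_mul, mul_one]
        ring
      linarith
  refine ⟨main, ?_⟩
  rintro obj Z₁ Z₂ ⟨⟨y, hy, rfl⟩, -⟩ ⟨-, hub⟩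
  exact hub ⟨y, main y hy, rfl⟩
end

section
/- For a tree t and distinct leaves ℓ, ℓ' of t, there exists a split s of t such that either ℓ ∈ left(s) and ℓ' ∈ right(s), or ℓ ∈ right(s) and ℓ' ∈ left(s). Consequently, if x is a binary encoding and y a nonnegative leaf-weight vector satisfying the split constraints for all splits, then if y_{ℓ} > 0 and y_{ℓ'} > 0 for distinct leaves ℓ ≠ ℓ', a contradiction arises with the split constraints at s (since q(s,x) ∈ {0,1}). -/
lemma pref_cons (b c : Bool) {s a : List Bool} (h : (s ++ [c]) <+: a) :
    ((b :: s) ++ [c]) <+: (b :: a) := by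
  obtain ⟨u, hu⟩ := h
  exact ⟨u, by simp [← hu]⟩

lemma sep_aux (t : BTree) (ℓ ℓ' : List Bool)
    (hℓ : ℓ ∈ t.leavesF) (hℓ' : ℓ' ∈ t.leavesF) (hne : ℓ ≠ ℓ') :
    ∃ s ∈ t.splitsF,
      ((s ++ [true]) <+: ℓ ∧ (s ++ [false]) <+: ℓ') ∨
      ((s ++ [false]) <+: ℓ ∧ (s ++ [true]) <+: ℓ') := by
  induction t generalizing ℓ ℓ' with
  | leaf =>
      simp [BTree.leavesF] at hℓ hℓ'
      exact absurd (hℓ.trans hℓ'.symm) hne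
  | node l r ihl ihr =>
      simp only [BTree.leavesF, Finset.mem_union, Finset.mem_image] at hℓ hℓ'
      rcases hℓ with ⟨a, ha, rfl⟩ | ⟨a, ha, rfl⟩ <;>
        rcases hℓ' with ⟨b, hb, rfl⟩ | ⟨b, hb, rfl⟩
      · have hab : a ≠ b := fun h => hne (by rw [h])
        obtain ⟨s, hs, h⟩ := ihl a b ha hb hab
        refine ⟨true :: s, ?_, ?_⟩
        · simp only [BTree.splitsF, Finset.mem_insert, Finset.mem_union, Finset.mem_image]
          exact Or.inr (Or.inl ⟨s, hs, rfl⟩)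
        · rcases h with ⟨h1, h2⟩ | ⟨h1, h2⟩
          · exact Or.inl ⟨pref_cons true _ h1, pref_cons true _ h2⟩
          · exact Or.inr ⟨pref_cons true _ h1, pref_cons true _ h2⟩
      · exact ⟨[], by simp [BTree.splitsF], Or.inl ⟨⟨a, rfl⟩, ⟨b, rfl⟩⟩⟩
      · exact ⟨[], by simp [BTree.splitsF], Or.inr ⟨⟨a, rfl⟩, ⟨b, rfl⟩⟩⟩
      · have hab : a ≠ b := fun h => hne (by rw [h])
        obtain ⟨s, hs, h⟩ := ihr a b ha hb hab
        refine ⟨false :: s, ?_, ?_⟩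
        · simp only [BTree.splitsF, Finset.mem_insert, Finset.mem_union, Finset.mem_image]
          exact Or.inr (Or.inr ⟨s, hs, rfl⟩)
        · rcases h with ⟨h1, h2⟩ | ⟨h1, h2⟩
          · exact Or.inl ⟨pref_cons false _ h1, pref_cons false _ h2⟩
          · exact Or.inr ⟨pref_cons false _ h1, pref_cons false _ h2⟩

/-- any two distinct leaves `ℓ, ℓ'` of a tree `t` are separated by some
split `s` (one leaf in `left(s)`, the other in `right(s)`); consequently, for any binary
encoding (0/1 query values `q`) and nonnegative leaf weights `y` satisfying all split
constraints, it cannot be that `y_ℓ > 0` and `y_{ℓ'} > 0` simultaneously. -/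
theorem distinct_leaves_separated (t : BTree) (ℓ ℓ' : List Bool)
    (hℓ : ℓ ∈ t.leavesF) (hℓ' : ℓ' ∈ t.leavesF) (hne : ℓ ≠ ℓ') :
    (∃ s ∈ t.splitsF,
        (ℓ ∈ t.leftF s ∧ ℓ' ∈ t.rightF s) ∨ (ℓ ∈ t.rightF s ∧ ℓ' ∈ t.leftF s)) ∧
    (∀ (q : List Bool → Bool) (y : List Bool → ℝ),
      (∀ ℓ'' ∈ t.leavesF, 0 ≤ y ℓ'') →
      (∀ s ∈ t.splitsF, (∑ ℓ'' ∈ t.leftF s, y ℓ'') ≤ BTree.qval q s) →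
      (∀ s ∈ t.splitsF, (∑ ℓ'' ∈ t.rightF s, y ℓ'') ≤ 1 - BTree.qval q s) →
      ¬(0 < y ℓ ∧ 0 < y ℓ')) := by
  obtain ⟨s, hs, hsep⟩ := sep_aux t ℓ ℓ' hℓ hℓ' hne
  have hmem : (ℓ ∈ t.leftF s ∧ ℓ' ∈ t.rightF s) ∨ (ℓ ∈ t.rightF s ∧ ℓ' ∈ t.leftF s) := by
    rcases hsep with ⟨h1, h2⟩ | ⟨h1, h2⟩
    · exact Or.inl ⟨Finset.mem_filter.2 ⟨hℓ, by simpa using h1⟩,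
        Finset.mem_filter.2 ⟨hℓ', by simpa using h2⟩⟩
    · exact Or.inr ⟨Finset.mem_filter.2 ⟨hℓ, by simpa using h1⟩,
        Finset.mem_filter.2 ⟨hℓ', by simpa using h2⟩⟩
  refine ⟨⟨s, hs, hmem⟩, ?_⟩
  intro q y hy hleft hright ⟨hyℓ, hyℓ'⟩
  have hnonneg : ∀ S : Finset (List Bool), S ⊆ t.leavesF →
      ∀ z ∈ S, z ∈ S → y z ≤ ∑ w ∈ S, y w := by
    intro S hS z hz _
    exact Finset.single_le_sum (fun w hw => hy w (hS hw)) hz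
  have hLsub : t.leftF s ⊆ t.leavesF := Finset.filter_subset _ _
  have hRsub : t.rightF s ⊆ t.leavesF := Finset.filter_subset _ _
  have hL := hleft s hs
  have hR := hright s hs
  rcases hmem with ⟨h1, h2⟩ | ⟨h1, h2⟩
  · have hyL : y ℓ ≤ ∑ w ∈ t.leftF s, y w :=
      Finset.single_le_sum (fun w hw => hy w (hLsub hw)) h1
    have hyR : y ℓ' ≤ ∑ w ∈ t.rightF s, y w :=
      Finset.single_le_sum (fun w hw => hy w (hRsub hw)) h2
    cases hq : q s <;> simp [BTree.qval, hq] at hL hR <;> linarith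
  · have hyL : y ℓ' ≤ ∑ w ∈ t.leftF s, y w :=
      Finset.single_le_sum (fun w hw => hy w (hLsub hw)) h2
    have hyR : y ℓ ≤ ∑ w ∈ t.rightF s, y w :=
      Finset.single_le_sum (fun w hw => hy w (hRsub hw)) h1
    cases hq : q s <;> simp [BTree.qval, hq] at hL hR <;> linarith
end
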